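/- Let G be a locally compact Hausdorff abelian topological group and let C, C' be any two compact open subgroups of G. If μ and μ' are the Haar measures with μ(C) = 1 and μ'(C') = 1, then there exists a positive rational number q with μ' = q • μ. -/

import Mathlib

/-!
Two regular Haar measures differ by a scalar `c`, which can be read off on the compact open
subgroup `D = C ∩ C'`. A compact subgroup meets only finitely many cosets of an open subgroup, so
`D` has finite index `n` in `C` and `m` in `C'`; hence `μ D = 1 / n`, `μ' D = 1 / m` and
`c = n / m`.
-/

open MeasureTheory Measure ENNReal QuotientAddGroup

namespace QuotientAddGroup

variable {G : Type*} [AddGroup G] {H K : AddSubgroup G}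

lemma preimage_mk_singleton_mk (x : G) :
    (mk : G → G ⧸ H) ⁻¹' {(x : G ⧸ H)} = (-x + ·) ⁻¹' H := by
  ext y
  simp [QuotientAddGroup.eq, eq_comm]

lemma preimage_image_mk_of_le (hHK : H ≤ K) : (mk : G → G ⧸ H) ⁻¹' (mk '' K) = K := by
  refine subset_antisymm ?_ fun x hx ↦ ⟨x, hx, rfl⟩
  rintro x ⟨k, hk, hkx⟩
  simpa using K.add_mem hk (hHK (QuotientAddGroup.eq.mp hkx))

lemma finite_image_mk_of_isOpen_of_isCompact [TopologicalSpace G] [IsTopologicalAddGroup G]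
    (hH : IsOpen (H : Set G)) (hK : IsCompact (K : Set G)) :
    (mk '' (K : Set G) : Set (G ⧸ H)).Finite := by
  have : DiscreteTopology (G ⧸ H) := discreteTopology hH
  exact (hK.image continuous_mk).finite_of_discrete

variable [MeasurableSpace G] [MeasurableAdd G] (μ : Measure G) [μ.IsAddLeftInvariant]

lemma measure_preimage_mk_singleton (y : G ⧸ H) : μ ((mk : G → G ⧸ H) ⁻¹' {y}) = μ H := by
  induction y using QuotientAddGroup.induction_on with
  | H x => rw [preimage_mk_singleton_mk, measure_preimage_add]

lemma measurableSet_preimage_mk_singleton (hH : MeasurableSet (H : Set G))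
    (y : G ⧸ H) : MeasurableSet ((mk : G → G ⧸ H) ⁻¹' {y}) := by
  induction y using QuotientAddGroup.induction_on with
  | H x => exact preimage_mk_singleton_mk x ▸ measurable_const_add (-x) hH

lemma exists_nat_measure_eq_mul_of_le (hHK : H ≤ K)
    (hH : MeasurableSet (H : Set G)) (hK : (mk '' (K : Set G) : Set (G ⧸ H)).Finite) :
    ∃ n : ℕ, μ K = n * μ H := by
  refine ⟨hK.toFinset.card, ?_⟩
  calc μ K = μ ((mk : G → G ⧸ H) ⁻¹' ↑hK.toFinset) := by
        rw [hK.coe_toFinset, preimage_image_mk_of_le hHK]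
    _ = ∑ y ∈ hK.toFinset, μ (mk ⁻¹' {y}) :=
      (sum_measure_preimage_singleton _ fun y _ ↦ measurableSet_preimage_mk_singleton hH y).symm
    _ = hK.toFinset.card * μ H := by
      simp only [measure_preimage_mk_singleton, Finset.sum_const, nsmul_eq_mul]

end QuotientAddGroup

lemma MeasureTheory.Measure.eq_smul_of_apply_eq_mul {α : Type*} [MeasurableSpace α]
    {μ' μ : Measure α} {c a : ℝ≥0∞} {s : Set α} (h : μ' = c • μ) (hs : μ' s = a * μ s)
    (hs₀ : μ s ≠ 0) (hs_top : μ s ≠ ∞) : μ' = a • μ := by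
  rw [h, smul_apply, smul_eq_mul, ENNReal.mul_left_inj hs₀ hs_top] at hs
  rwa [← hs]

theorem haar_normalizations_differ_by_rational_general
    {G : Type*} [AddCommGroup G] [TopologicalSpace G] [IsTopologicalAddGroup G]
    [LocallyCompactSpace G] [MeasurableSpace G] [BorelSpace G]
    (C C' : AddSubgroup G)
    (hCc : IsCompact (C : Set G)) (hCo : IsOpen (C : Set G))
    (hC'c : IsCompact (C' : Set G)) (hC'o : IsOpen (C' : Set G))
    (μ μ' : Measure G) [μ.IsAddHaarMeasure] [μ.Regular]
    [μ'.IsAddHaarMeasure] [μ'.Regular]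
    (hμ : μ (C : Set G) = 1) (hμ' : μ' (C' : Set G) = 1) :
    ∃ q : ℚ, 0 < q ∧ μ' = ENNReal.ofReal (q : ℝ) • μ := by
  set D : AddSubgroup G := C ⊓ C'
  have hDo : IsOpen (D : Set G) := hCo.inter hC'o
  obtain ⟨n, hn⟩ := exists_nat_measure_eq_mul_of_le μ inf_le_left hDo.measurableSet
    (finite_image_mk_of_isOpen_of_isCompact hDo hCc)
  obtain ⟨m, hm⟩ := exists_nat_measure_eq_mul_of_le μ' inf_le_right hDo.measurableSet
    (finite_image_mk_of_isOpen_of_isCompact hDo hC'c)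
  rw [hμ, eq_comm, mul_comm] at hn
  rw [hμ', eq_comm, mul_comm] at hm
  have hn₀ : n ≠ 0 := by rintro rfl; simp at hn
  have hm₀ : m ≠ 0 := by rintro rfl; simp at hm
  have hμD : μ D = (n : ℝ≥0∞)⁻¹ := ENNReal.eq_inv_of_mul_eq_one_left hn
  have hμ'D : μ' D = (m : ℝ≥0∞)⁻¹ := ENNReal.eq_inv_of_mul_eq_one_left hm
  have hq : ENNReal.ofReal ((n / m : ℚ) : ℝ) = n / m := by
    push_cast
    rw [ENNReal.ofReal_div_of_pos (by positivity), ofReal_natCast, ofReal_natCast]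
  refine ⟨n / m, by positivity, eq_smul_of_apply_eq_mul
    (isAddLeftInvariant_eq_smul_of_regular μ' μ) (s := D) ?_ ?_ ?_⟩
  · rw [hq, hμD, hμ'D, ENNReal.div_eq_inv_mul, mul_assoc,
      ENNReal.mul_inv_cancel (by exact_mod_cast hn₀) (natCast_ne_top n), mul_one]
  · simp [hμD]
  · simpa [hμD] using hn₀

/-- For any two compact open subgroups `C`, `C'` of a locally compact
Hausdorff abelian topological group `G`, the Haar measures normalized by `μ(C) = 1`
and `μ'(C') = 1` differ by a positive rational factor. -/
theorem haar_normalizations_differ_by_rational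
    {G : Type*} [AddCommGroup G] [TopologicalSpace G] [IsTopologicalAddGroup G]
    [LocallyCompactSpace G] [T2Space G] [MeasurableSpace G] [BorelSpace G]
    (C C' : AddSubgroup G)
    (hCc : IsCompact (C : Set G)) (hCo : IsOpen (C : Set G))
    (hC'c : IsCompact (C' : Set G)) (hC'o : IsOpen (C' : Set G))
    (μ μ' : Measure G) [μ.IsAddHaarMeasure] [μ.Regular]
    [μ'.IsAddHaarMeasure] [μ'.Regular]
    (hμ : μ (C : Set G) = 1) (hμ' : μ' (C' : Set G) = 1) :
    ∃ q : ℚ, 0 < q ∧ μ' = ENNReal.ofReal (q : ℝ) • μ :=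
  haar_normalizations_differ_by_rational_general C C' hCc hCo hC'c hC'o μ μ' hμ hμ'
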